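/- arXiv:1809.08796 — 2 statements merged into one kernel-verified Lean document; each statement's English description precedes it below -/
import Mathlib

section
/- Under Notation (*): if (J(H')^s : m) = p and (J(H̃)^s : m) ≠ p, then there exists a monomial m_0 ∉ p such that (J(H)^s : m·m_0) = p + (y); in particular p + (y) is an associated prime of J(H)^s. -/
open MvPolynomial

noncomputable section

/-- A finite simple hypergraph on a vertex set `V`: edges are nonempty subsets of `V`
forming an antichain (a clutter). -/
structure SimpleHypergraph (σ : Type*) where
  V : Finset σ
  E : Finset (Finset σ)
  edge_sub : ∀ e ∈ E, e ⊆ V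
  edge_nonempty : ∀ e ∈ E, e.Nonempty
  simple : ∀ e ∈ E, ∀ f ∈ E, e ⊆ f → e = f

/-- The prime ideal generated by the variables indexed by `e`. -/
def primeOf {σ : Type*} (K : Type*) [Field K] (e : Finset σ) : Ideal (MvPolynomial σ K) :=
  Ideal.span ((fun i => (X i : MvPolynomial σ K)) '' e)

/-- The cover ideal of a set of edges: the intersection of the edge primes. -/
def coverIdeal {σ : Type*} (K : Type*) [Field K] (E : Finset (Finset σ)) :
    Ideal (MvPolynomial σ K) :=
  ⨅ e ∈ E, primeOf K e

/-- The squarefree monomial supported on `T`. -/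
def xU {σ : Type*} (K : Type*) [Field K] (T : Finset σ) : MvPolynomial σ K :=
  ∏ i ∈ T, X i
/-- `T` is a vertex cover of the edge set `E`. -/
def IsCover {σ : Type*} (E : Finset (Finset σ)) (T : Finset σ) : Prop :=
  ∀ e ∈ E, ∃ v ∈ e, v ∈ T

/-- `T` is a minimal vertex cover of the edge set `E`. -/
def IsMinimalCover {σ : Type*} (E : Finset (Finset σ)) (T : Finset σ) : Prop :=
  IsCover E T ∧ ∀ T' ⊂ T, ¬ IsCover E T'

/-- `m` is a minimal monomial generator of the monomial ideal `I`: it lies in `I`, and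
every divisor of `m` lying in `I` is associated to `m`. -/
def IsMinMonGen {σ K : Type*} [Field K] (I : Ideal (MvPolynomial σ K))
    (m : MvPolynomial σ K) : Prop :=
  m ∈ I ∧ ∀ d : MvPolynomial σ K, d ∣ m → d ∈ I → Associated d m

/-- `(V', E')` is a shadow of the hypergraph `H`. -/
def IsShadow {σ : Type*} [DecidableEq σ] (H : SimpleHypergraph σ) (V' : Finset σ) (E' : Finset (Finset σ)) : Prop :=
  V' ⊆ H.V ∧ (∀ e ∈ E', e ⊆ V') ∧ (∀ e ∈ E', e.Nonempty) ∧
    (∀ e ∈ E', ∀ f ∈ E', e ⊆ f → e = f) ∧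
    E'.card = H.E.card ∧ ∀ e ∈ H.E, e ∩ V' ∈ E'

/-- The cover ideal of a hypergraph on vertex set `V'` (edges `E'`, subsets of `V'`),
as an ideal of the small polynomial ring `K[V']`. -/
def smallCover {σ : Type*} [DecidableEq σ] (K : Type*) [Field K] (V' : Finset σ)
    (E' : Finset (Finset σ)) : Ideal (MvPolynomial {x : σ // x ∈ V'} K) :=
  ⨅ e ∈ E', primeOf K (e.subtype (· ∈ V'))

/-- `(V', E')` is an odd cycle graph `C_{2n+1}` for some positive `n`. -/
def IsOddCycle {σ : Type*} [DecidableEq σ] (V' : Finset σ) (E' : Finset (Finset σ)) : Prop :=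
  ∃ n : ℕ, 0 < n ∧ ∃ f : Fin (2 * n + 1) → σ, Function.Injective f ∧
    V' = Finset.univ.image f ∧ E' = Finset.univ.image (fun i => ({f i, f (i + 1)} : Finset σ))

/-- The Mathlib (Dec 2024) meaning of `IsAssociatedPrime`: `I` is prime and equals the
annihilator of some `x : M`. -/
def IsAssociatedPrimeOld {R : Type*} [CommRing R] (I : Ideal R) (M : Type*) [AddCommGroup M]
    [Module R M] : Prop :=
  I.IsPrime ∧ ∃ x : M, I = (Submodule.span R {x}).annihilator

/- Notation (*): `H = (V, E)` is a hypergraph with `V = X ∪ {y}` where `X = V \ {y}`;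
`y` belongs to exactly one edge `e_y ∈ E`; `e := e_y \ {y}`;
`H' = (X, (E \ {e_y}) ∪ {e})` is the shadow of `H` on `X`, with edge set
`insert (ey.erase y) (H.E.erase ey)`; `H̃ = H_X` is the induced subhypergraph on `X`,
with edge set `H.E.filter (· ⊆ H.V.erase y)`.  Cover ideals of `H'` and `H̃` are taken as
(cone) ideals of the ambient ring `K[V] = MvPolynomial σ K`, generated by the same monomials
as the corresponding ideals of `K[X]`. -/

/-!
Identify a monomial ideal with its upward-closed set of exponents. If `A` and `B` are the exponent
sets of `J(H̃)` and `J(H')`, that of `J(H)` is `B ∪ (A ∩ (y))`, so an exponent of `J(H)^s` of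
`y`-degree at least `i` is, after deleting `y`, a sum of `i` exponents from `A` and `s - i` from `B`.

Since `J(H̃)^s : m ≠ p`, some `u` has `u·m ∈ A^s` but `u ∉ p`. Let `j < s` be the largest level for
which some `m' ∉ p` has `m'·m ∈ A^(s-j) B^j`; we may take `m'` free of `y`. Colon `J(H)^s` by
`m · m' · y^(s-1-j)`: every multiple of `y` lies in the colon, and a `y`-free `u` in it has
`u·m'·m ∈ A^i B^(s-i)` with `i ≤ s-1-j`, so `u·m' ∈ p` by maximality of `j` and `u ∈ p` since `p`
is prime. Finally `p + (y)` is prime, being the preimage of `p` under `y ↦ 0`.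
-/

open Pointwise Set

section UpperNsmul

variable {α : Type*} [AddCommMonoid α] {s t : Set α}

/-- The exponents of the `n`-th power of the monomial ideal with exponent set `s`. The `0`-th
power is `univ` rather than `0 • s = {0}`, so that powers of upper sets are upper sets. -/
def upperNsmul (s : Set α) : ℕ → Set α
  | 0 => univ
  | n + 1 => s + upperNsmul s n

theorem upperNsmul_mono (h : s ⊆ t) : ∀ n, upperNsmul s n ⊆ upperNsmul t n
  | 0 => subset_rfl
  | n + 1 => add_subset_add h (upperNsmul_mono h n)

variable [PartialOrder α] [CanonicallyOrderedAdd α]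

theorem IsUpperSet.add_left' (ht : IsUpperSet t) : IsUpperSet (s + t) := by
  rintro _ b hle ⟨x, hx, z, hz, rfl⟩
  obtain ⟨k, rfl⟩ := exists_add_of_le hle
  exact ⟨x, hx, z + k, ht le_self_add hz, (add_assoc x z k).symm⟩

theorem IsUpperSet.univ_add (hs : IsUpperSet s) : univ + s = s :=
  (add_subset_iff.2 fun _ _ _ hb => hs le_add_self hb).antisymm
    fun c hc => ⟨0, trivial, c, hc, zero_add c⟩

theorem isUpperSet_upperNsmul (hs : IsUpperSet s) : ∀ n, IsUpperSet (upperNsmul s n)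
  | 0 => isUpperSet_univ
  | n + 1 => (isUpperSet_upperNsmul hs n).add_left'

theorem upperNsmul_add (hs : IsUpperSet s) (m n : ℕ) :
    upperNsmul s m + upperNsmul s n = upperNsmul s (m + n) := by
  induction m with
  | zero => rw [Nat.zero_add]; exact (isUpperSet_upperNsmul hs n).univ_add
  | succ m ih =>
    rw [Nat.succ_add]
    exact (add_assoc s _ _).trans (congrArg (s + ·) ih)

end UpperNsmul

theorem IsUpperSet.preimage_add_right {α : Type*} [AddCommMonoid α] [Preorder α]
    [IsOrderedAddMonoid α] {s : Set α} (hs : IsUpperSet s) (d : α) :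
    IsUpperSet ((· + d) ⁻¹' s) :=
  fun _ _ hle ha => hs (add_le_add_left hle d) ha

theorem Nat.exists_lt_greatest_not {P : ℕ → Prop} {n : ℕ} (h0 : ¬ P 0) (hn : P n) :
    ∃ j < n, ¬ P j ∧ ∀ k, j < k → k ≤ n → P k := by
  classical
  have hj : ¬ P (Nat.findGreatest (¬ P ·) n) :=
    Nat.findGreatest_spec (P := (¬ P ·)) (Nat.zero_le n) h0
  exact ⟨_, (Nat.findGreatest_le n).lt_of_ne fun h => hj (by rwa [h]), hj,
    fun k hk hkn => not_not.1 (Nat.findGreatest_is_greatest hk hkn)⟩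

namespace MvPolynomial

section MonomialIdeal

variable {σ R : Type*} [CommSemiring R] {S T : Set (σ →₀ ℕ)}

def monomialIdeal (R : Type*) [CommSemiring R] (S : Set (σ →₀ ℕ)) : Ideal (MvPolynomial σ R) :=
  Ideal.span ((fun c => monomial c (1 : R)) '' S)

theorem mem_monomialIdeal_iff (hS : IsUpperSet S) {f : MvPolynomial σ R} :
    f ∈ monomialIdeal R S ↔ ∀ c ∈ f.support, c ∈ S := by
  rw [monomialIdeal, mem_ideal_span_monomial_image]
  exact forall₂_congr fun c _ => ⟨fun ⟨a, ha, hac⟩ => hS hac ha, fun hc => ⟨c, hc, le_rfl⟩⟩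

theorem monomial_mem_monomialIdeal_iff [Nontrivial R] (hS : IsUpperSet S) {c : σ →₀ ℕ} :
    monomial c (1 : R) ∈ monomialIdeal R S ↔ c ∈ S := by
  classical
  simp [mem_monomialIdeal_iff hS, support_monomial]

theorem monomialIdeal_mono (h : S ⊆ T) : monomialIdeal R S ≤ monomialIdeal R T :=
  Ideal.span_mono (image_mono h)

theorem monomialIdeal_upperClosure :
    monomialIdeal R (upperClosure S : Set (σ →₀ ℕ)) = monomialIdeal R S := by
  ext f
  simp only [monomialIdeal, mem_ideal_span_monomial_image, SetLike.mem_coe, mem_upperClosure]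
  exact forall₂_congr fun c _ => ⟨fun ⟨_, ⟨b, hb, hba⟩, hac⟩ => ⟨b, hb, hba.trans hac⟩,
    fun ⟨b, hb, hbc⟩ => ⟨c, ⟨b, hb, hbc⟩, le_rfl⟩⟩

theorem monomialIdeal_univ : monomialIdeal R (univ : Set (σ →₀ ℕ)) = ⊤ :=
  (Ideal.eq_top_iff_one _).2 (Ideal.subset_span ⟨0, trivial, rfl⟩)

theorem monomialIdeal_union : monomialIdeal R (S ∪ T) = monomialIdeal R S ⊔ monomialIdeal R T := by
  rw [monomialIdeal, image_union, Ideal.span_union]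
  rfl

theorem monomialIdeal_inter (hS : IsUpperSet S) (hT : IsUpperSet T) :
    monomialIdeal R (S ∩ T) = monomialIdeal R S ⊓ monomialIdeal R T := by
  ext f
  simp only [Ideal.mem_inf, mem_monomialIdeal_iff hS, mem_monomialIdeal_iff hT,
    mem_monomialIdeal_iff (hS.inter hT), mem_inter_iff, forall₂_and]

theorem monomialIdeal_add : monomialIdeal R (S + T) = monomialIdeal R S * monomialIdeal R T := by
  rw [monomialIdeal, monomialIdeal, monomialIdeal, Ideal.span_mul_span', ← image2_add, image_image2,
    ← image2_mul, image2_image_left, image2_image_right]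
  simp only [monomial_mul, one_mul]

theorem monomialIdeal_upperNsmul (n : ℕ) :
    monomialIdeal R (upperNsmul S n) = monomialIdeal R S ^ n := by
  induction n with
  | zero => rw [pow_zero, Ideal.one_eq_top]; exact monomialIdeal_univ
  | succ n ih => rw [pow_succ', ← ih, ← monomialIdeal_add]; rfl

theorem colon_monomialIdeal (hS : IsUpperSet S) (d : σ →₀ ℕ) :
    (monomialIdeal R S).colon (Ideal.span {monomial d (1 : R)}) =
      monomialIdeal R ((· + d) ⁻¹' S) := by
  ext f
  rw [Ideal.mem_colon_span_singleton, mem_monomialIdeal_iff hS,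
    mem_monomialIdeal_iff (hS.preimage_add_right d)]
  constructor
  · intro h c hc
    refine h _ ?_
    rwa [mem_support_iff, coeff_mul_monomial, mul_one, ← mem_support_iff]
  · intro h c hc
    rw [mem_support_iff, coeff_mul_monomial'] at hc
    split_ifs at hc with hle
    · rw [mul_one, ← mem_support_iff] at hc
      simpa only [mem_preimage, tsub_add_cancel_of_le hle] using h _ hc
    · exact absurd rfl hc

theorem monomialIdeal_setOf_exists_ne_zero (e : Set σ) :
    monomialIdeal R {c | ∃ v ∈ e, c v ≠ 0} = Ideal.span (X '' e) := by
  have : {c : σ →₀ ℕ | ∃ v ∈ e, c v ≠ 0} = upperClosure ((Finsupp.single · 1) '' e) := by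
    ext c
    simp [Finsupp.single_le_iff, Nat.one_le_iff_ne_zero]
  rw [this, monomialIdeal_upperClosure, monomialIdeal, image_image]
  rfl

theorem monomialIdeal_setOf_ne_zero (y : σ) :
    monomialIdeal R {c | c y ≠ 0} = Ideal.span {(X y : MvPolynomial σ R)} := by
  simpa using monomialIdeal_setOf_exists_ne_zero (R := R) {y}

end MonomialIdeal

end MvPolynomial

section EraseStable

open Finsupp

variable {σ : Type*} {y : σ} {S T : Set (σ →₀ ℕ)}

theorem Finsupp.erase_le_self {M : Type*} [AddCommMonoid M] [PartialOrder M]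
    [CanonicallyOrderedAdd M] (a : σ) (f : σ →₀ M) : f.erase a ≤ f := fun v => by
  classical
  rw [erase_apply]
  split_ifs
  exacts [zero_le, le_rfl]

theorem isUpperSet_setOf_ne_zero (y : σ) : IsUpperSet {c : σ →₀ ℕ | c y ≠ 0} :=
  fun _ _ hle ha => ((Nat.pos_of_ne_zero ha).trans_le (hle y)).ne'

theorem isUpperSet_setOf_exists_ne_zero (e : Set σ) : IsUpperSet {c : σ →₀ ℕ | ∃ v ∈ e, c v ≠ 0} :=
  fun _ _ hle ⟨v, hv, hav⟩ => ⟨v, hv, isUpperSet_setOf_ne_zero v hle hav⟩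

theorem mapsTo_erase_add (hS : MapsTo (erase y) S S) (hT : MapsTo (erase y) T T) :
    MapsTo (erase y) (S + T) (S + T) := by
  rintro _ ⟨a, ha, b, hb, rfl⟩
  rw [erase_add]
  exact add_mem_add (hS ha) (hT hb)

theorem mapsTo_erase_upperNsmul (hS : MapsTo (erase y) S S) :
    ∀ n, MapsTo (erase y) (upperNsmul S n) (upperNsmul S n)
  | 0 => mapsTo_univ _ _
  | n + 1 => mapsTo_erase_add hS (mapsTo_erase_upperNsmul hS n)

theorem mapsTo_erase_preimage_add (hS : MapsTo (erase y) S S) {d : σ →₀ ℕ} (hd : d y = 0) :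
    MapsTo (erase y) ((· + d) ⁻¹' S) ((· + d) ⁻¹' S) := fun c hc => by
  simpa only [mem_preimage, erase_add, erase_of_notMem_support (notMem_support_iff.2 hd)]
    using hS hc

end EraseStable

section CoverExponents

variable {σ : Type*} {y : σ} {E F : Finset (Finset σ)}

def coverExponents (E : Finset (Finset σ)) : Set (σ →₀ ℕ) :=
  {c | ∀ f ∈ E, ∃ v ∈ f, c v ≠ 0}

theorem isUpperSet_coverExponents (E : Finset (Finset σ)) : IsUpperSet (coverExponents E) :=
  fun _ _ hle ha f hf => isUpperSet_setOf_exists_ne_zero (f : Set σ) hle (ha f hf)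

theorem coverExponents_anti (h : E ⊆ F) : coverExponents F ⊆ coverExponents E :=
  fun _ hc f hf => hc f (h hf)

theorem mapsTo_erase_coverExponents (hy : ∀ f ∈ E, y ∉ f) :
    MapsTo (Finsupp.erase y) (coverExponents E) (coverExponents E) := fun _ hc f hf =>
  (hc f hf).imp fun v ⟨hv, hcv⟩ =>
    ⟨hv, by rwa [Finsupp.erase_ne (ne_of_mem_of_not_mem hv (hy f hf))]⟩

theorem coverExponents_insert [DecidableEq σ] (f : Finset σ) (E : Finset (Finset σ)) :
    coverExponents (insert f E) = {c | ∃ v ∈ f, c v ≠ 0} ∩ coverExponents E := by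
  ext c
  simp [coverExponents]

theorem coverExponents_insert_eq_union [DecidableEq σ] {f : Finset σ} (hy : y ∈ f) :
    coverExponents (insert f E) =
      coverExponents (insert (f.erase y) E) ∪ (coverExponents E ∩ {c | c y ≠ 0}) := by
  ext c
  simp only [coverExponents_insert, mem_union, mem_inter_iff, mem_ofPred_eq]
  constructor
  · rintro ⟨⟨v, hv, hcv⟩, hE⟩
    by_cases hvy : v = y
    · exact .inr ⟨hE, hvy ▸ hcv⟩
    · exact .inl ⟨⟨v, Finset.mem_erase.2 ⟨hvy, hv⟩, hcv⟩, hE⟩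
  · rintro (⟨⟨v, hv, hcv⟩, hE⟩ | ⟨hE, hcy⟩)
    exacts [⟨⟨v, Finset.mem_of_mem_erase hv, hcv⟩, hE⟩, ⟨⟨y, hy, hcy⟩, hE⟩]

theorem coverIdeal_eq_monomialIdeal (K : Type*) [Field K] (E : Finset (Finset σ)) :
    coverIdeal K E = MvPolynomial.monomialIdeal K (coverExponents E) := by
  classical
  induction E using Finset.induction_on with
  | empty => simp [coverIdeal, coverExponents, MvPolynomial.monomialIdeal_univ]
  | insert f E _ ih =>
    rw [coverIdeal, Finset.iInf_insert, ← coverIdeal, ih, coverExponents_insert,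
      MvPolynomial.monomialIdeal_inter _ (isUpperSet_coverExponents E), primeOf,
      ← MvPolynomial.monomialIdeal_setOf_exists_ne_zero]
    · simp only [Finset.mem_coe]
    · exact isUpperSet_setOf_exists_ne_zero (f : Set σ)

end CoverExponents

section UnionInter

open Finsupp

variable {σ : Type*} {y : σ} {A B : Set (σ →₀ ℕ)}

theorem add_single_mem_upperNsmul_inter (hA : IsUpperSet A) :
    ∀ {i : ℕ} {u : σ →₀ ℕ}, u ∈ upperNsmul A i →
      u + single y i ∈ upperNsmul (A ∩ {c | c y ≠ 0}) i
  | 0, _, _ => trivial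
  | i + 1, _, ⟨a, ha, b, hb, rfl⟩ => by
    rw [show a + b + single y (i + 1) = (a + single y 1) + (b + single y i) by
      rw [add_comm i 1, single_add]; abel]
    exact add_mem_add ⟨hA le_self_add ha, by simp⟩ (add_single_mem_upperNsmul_inter hA hb)

theorem exists_of_mem_upperNsmul_union_inter (hAy : MapsTo (erase y) A A)
    (hBy : MapsTo (erase y) B B) :
    ∀ {n : ℕ} {c : σ →₀ ℕ}, c ∈ upperNsmul (B ∪ (A ∩ {c | c y ≠ 0})) n →
      ∃ i ≤ n, i ≤ c y ∧ c.erase y ∈ upperNsmul A i + upperNsmul B (n - i)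
  | 0, c, _ => ⟨0, le_rfl, Nat.zero_le _, c.erase y, trivial, 0, trivial, add_zero _⟩
  | n + 1, _, ⟨a, ha, b, hb, rfl⟩ => by
    obtain ⟨i, hin, hiy, u, hu, v, hv, huv : u + v = b.erase y⟩ :=
      exists_of_mem_upperNsmul_union_inter hAy hBy hb
    rw [show (a + b) y = a y + b y from rfl, erase_add, ← huv]
    rcases ha with haB | ⟨haA, hay : a y ≠ 0⟩
    · refine ⟨i, by omega, by omega, ?_⟩
      rw [show n + 1 - i = (n - i) + 1 by omega, add_left_comm]
      exact add_mem_add hu (add_mem_add (hBy haB) hv)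
    · refine ⟨i + 1, by omega, by omega, ?_⟩
      rw [Nat.add_sub_add_right, ← add_assoc]
      exact add_mem_add (add_mem_add (hAy haA) hu) hv

theorem mem_upperNsmul_union_inter_of (hA : IsUpperSet A) (hB : IsUpperSet B) {n i : ℕ}
    {c : σ →₀ ℕ} (hin : i ≤ n) (hiy : i ≤ c y)
    (hc : c.erase y ∈ upperNsmul A i + upperNsmul B (n - i)) :
    c ∈ upperNsmul (B ∪ (A ∩ {c | c y ≠ 0})) n := by
  have hC : IsUpperSet (B ∪ (A ∩ {c | c y ≠ 0})) :=
    hB.union (hA.inter (isUpperSet_setOf_ne_zero y))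
  obtain ⟨u, hu, v, hv, huv : u + v = c.erase y⟩ := hc
  have hw : (u + single y i) + v ∈ upperNsmul (B ∪ (A ∩ {c | c y ≠ 0})) n := by
    rw [← Nat.add_sub_cancel' hin, ← upperNsmul_add hC]
    exact add_mem_add (upperNsmul_mono subset_union_right i (add_single_mem_upperNsmul_inter hA hu))
      (upperNsmul_mono subset_union_left _ hv)
  refine isUpperSet_upperNsmul hC n ?_ hw
  calc u + single y i + v = c.erase y + single y i := by rw [← huv]; abel
    _ ≤ c.erase y + single y (c y) := by gcongr
    _ = c := erase_add_single y c

end UnionInter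

section ColonComputation

open Finsupp

variable {σ : Type*} {y : σ} {A B : Set (σ →₀ ℕ)} {d : σ →₀ ℕ} {s : ℕ}

theorem exists_maximal_level (hA : IsUpperSet A) (hB : IsUpperSet B)
    (hAy : MapsTo (erase y) A A) (hBy : MapsTo (erase y) B B) (hdy : d y = 0)
    (hne : ¬ (· + d) ⁻¹' upperNsmul A s ⊆ (· + d) ⁻¹' upperNsmul B s) :
    ∃ j < s, ∃ m : σ →₀ ℕ, m y = 0 ∧ m + d ∉ upperNsmul B s ∧
      m + d ∈ upperNsmul A (s - j) + upperNsmul B j ∧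
      ∀ k, j < k → k ≤ s →
        (· + d) ⁻¹' (upperNsmul A (s - k) + upperNsmul B k) ⊆ (· + d) ⁻¹' upperNsmul B s := by
  obtain ⟨j, hjs, hj, hmax⟩ := Nat.exists_lt_greatest_not (n := s)
    (P := fun k => (· + d) ⁻¹' (upperNsmul A (s - k) + upperNsmul B k) ⊆ (· + d) ⁻¹' upperNsmul B s)
    (by rwa [Nat.sub_zero, upperNsmul, add_comm, (isUpperSet_upperNsmul hA s).univ_add])
    (by rw [Nat.sub_self, upperNsmul, (isUpperSet_upperNsmul hB s).univ_add])
  obtain ⟨m, hm, hmB⟩ := not_subset.1 hj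
  refine ⟨j, hjs, m.erase y, erase_same, fun h => hmB ?_, ?_, hmax⟩
  · exact isUpperSet_upperNsmul hB s (add_le_add_left (erase_le_self y m) d) h
  · exact mapsTo_erase_preimage_add
      (mapsTo_erase_add (mapsTo_erase_upperNsmul hAy _) (mapsTo_erase_upperNsmul hBy _)) hdy hm

theorem preimage_upperNsmul_union_inter_eq (hA : IsUpperSet A) (hB : IsUpperSet B)
    (hAy : MapsTo (erase y) A A) (hBy : MapsTo (erase y) B B) (hdy : d y = 0) {j : ℕ}
    (hjs : j < s) {m : σ →₀ ℕ} (hmy : m y = 0)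
    (hm : m + d ∈ upperNsmul A (s - j) + upperNsmul B j)
    (hmax : ∀ k, j < k → k ≤ s →
      (· + d) ⁻¹' (upperNsmul A (s - k) + upperNsmul B k) ⊆ (· + d) ⁻¹' upperNsmul B s)
    (hcancel : ∀ u, u + m + d ∈ upperNsmul B s → u + d ∈ upperNsmul B s) :
    (· + (d + (m + single y (s - 1 - j)))) ⁻¹' upperNsmul (B ∪ (A ∩ {c | c y ≠ 0})) s =
      (· + d) ⁻¹' upperNsmul B s ∪ {c | c y ≠ 0} := by
  have hC : IsUpperSet (B ∪ (A ∩ {c | c y ≠ 0})) :=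
    hB.union (hA.inter (isUpperSet_setOf_ne_zero y))
  ext u
  have hval : (u + (d + (m + single y (s - 1 - j)))) y = u y + (s - 1 - j) := by
    simp [hdy, hmy]
  have herase : (u + (d + (m + single y (s - 1 - j)))).erase y = u.erase y + (m + d) := by
    rw [erase_add, erase_add, erase_add, erase_single, erase_of_notMem_support
      (notMem_support_iff.2 hdy), erase_of_notMem_support (notMem_support_iff.2 hmy)]
    abel
  simp only [mem_preimage, mem_union, mem_ofPred_eq]
  constructor
  · intro hu
    by_cases huy : u y = 0
    · obtain ⟨i, his, hiy, hmem⟩ := exists_of_mem_upperNsmul_union_inter hAy hBy hu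
      rw [herase, erase_of_notMem_support (notMem_support_iff.2 huy), ← add_assoc] at hmem
      refine .inl (hcancel u (hmax (s - i) (by omega) (by omega) ?_))
      rwa [mem_preimage, Nat.sub_sub_self his]
    · exact .inr huy
  · rintro (hu | hu)
    · refine isUpperSet_upperNsmul hC s ?_ (upperNsmul_mono subset_union_left s hu)
      rw [← add_assoc]
      exact le_self_add
    · refine mem_upperNsmul_union_inter_of hA hB (Nat.sub_le s j) (by omega) ?_
      rw [herase, Nat.sub_sub_self hjs.le]
      exact (isUpperSet_upperNsmul hB j).add_left' le_add_self hm

end ColonComputation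

namespace MvPolynomial

section KillVariable

variable {σ R : Type*} [CommRing R] [DecidableEq σ] {y : σ} {T : Set (σ →₀ ℕ)}

theorem aeval_update_X_zero_monomial (y : σ) (c : σ →₀ ℕ) :
    aeval (Function.update (X : σ → MvPolynomial σ R) y 0) (monomial c (1 : R)) =
      if c y = 0 then monomial c 1 else 0 := by
  rw [aeval_monomial, map_one, one_mul]
  split_ifs with h
  · rw [monomial_eq, C_1, one_mul]
    refine Finsupp.prod_congr fun v hv => ?_
    rw [Function.update_of_ne (by rintro rfl; exact Finsupp.mem_support_iff.1 hv h)]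
  · exact Finset.prod_eq_zero (Finsupp.mem_support_iff.2 h) (by simp [h])

/-- Setting `y = 0` is the identity modulo `(y)`, and it maps `p` into itself because erasing `y`
from an exponent of `p` gives an exponent of `p`. -/
theorem monomialIdeal_sup_span_X_eq_comap (hT : MapsTo (Finsupp.erase y) T T) :
    monomialIdeal R T ⊔ Ideal.span {X y} =
      (monomialIdeal R T).comap (aeval (Function.update (X : σ → MvPolynomial σ R) y 0)) := by
  set φ : MvPolynomial σ R →ₐ[R] MvPolynomial σ R :=
    aeval (Function.update (X : σ → MvPolynomial σ R) y 0)
  refine le_antisymm (sup_le ?_ ?_) fun f hf => ?_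
  · rw [monomialIdeal, Ideal.span_le]
    rintro _ ⟨c, hc, rfl⟩
    show φ (monomial c 1) ∈ monomialIdeal R T
    rw [aeval_update_X_zero_monomial]
    split_ifs
    exacts [Ideal.subset_span ⟨c, hc, rfl⟩, zero_mem _]
  · rw [Ideal.span_singleton_le_iff_mem, Ideal.mem_comap, aeval_X, Function.update_self]
    exact zero_mem _
  · have hφ : (Ideal.Quotient.mkₐ R (Ideal.span {X y})).comp φ = Ideal.Quotient.mkₐ R _ := by
      ext v
      by_cases hv : v = y
      · subst hv
        simp [φ]
      · simp [φ, hv]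
    have hsub : f - φ f ∈ Ideal.span {X y} := Ideal.Quotient.eq.1 (AlgHom.congr_fun hφ f).symm
    have hφf : φ f ∈ monomialIdeal R T := hf
    simpa using add_mem (Ideal.mem_sup_right hsub) (Ideal.mem_sup_left hφf)

theorem isPrime_monomialIdeal_sup_span_X (hT : MapsTo (Finsupp.erase y) T T)
    (hp : (monomialIdeal R T).IsPrime) : (monomialIdeal R T ⊔ Ideal.span {X y}).IsPrime := by
  rw [monomialIdeal_sup_span_X_eq_comap hT]
  exact Ideal.IsPrime.comap _

end KillVariable

end MvPolynomial

theorem isAssociatedPrimeOld_of_colon_eq {R : Type*} [CommRing R] {I q : Ideal R} {g : R}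
    (hq : q.IsPrime) (h : I.colon (Ideal.span {g}) = q) : IsAssociatedPrimeOld q (R ⧸ I) := by
  refine ⟨hq, Ideal.Quotient.mk I g, ?_⟩
  rw [← h, ← Submodule.annihilator_map_mkQ_eq_colon, Submodule.map_span, image_singleton]
  rfl

namespace MvPolynomial

open Finsupp

variable {σ R : Type*} [CommRing R] [Nontrivial R] [DecidableEq σ] {y : σ}
  {A B : Set (σ →₀ ℕ)} {d : σ →₀ ℕ} {s : ℕ} {p : Ideal (MvPolynomial σ R)}

theorem exists_colon_eq_sup_span_X (hA : IsUpperSet A) (hB : IsUpperSet B) (hBA : B ⊆ A)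
    (hAy : MapsTo (erase y) A A) (hBy : MapsTo (erase y) B B) (hdy : d y = 0) (hp : p.IsPrime)
    (hcolon : (monomialIdeal R B ^ s).colon (Ideal.span {monomial d (1 : R)}) = p)
    (hne : (monomialIdeal R A ^ s).colon (Ideal.span {monomial d (1 : R)}) ≠ p) :
    (∃ c : σ →₀ ℕ, monomial c (1 : R) ∉ p ∧
      (monomialIdeal R (B ∪ (A ∩ {c | c y ≠ 0})) ^ s).colon
        (Ideal.span {monomial d (1 : R) * monomial c 1}) = p ⊔ Ideal.span {X y}) ∧
      (p ⊔ Ideal.span {X y}).IsPrime := by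
  have hC : IsUpperSet (B ∪ (A ∩ {c | c y ≠ 0})) :=
    hB.union (hA.inter (isUpperSet_setOf_ne_zero y))
  have hT := (isUpperSet_upperNsmul hB s).preimage_add_right d
  have hTy := mapsTo_erase_preimage_add (mapsTo_erase_upperNsmul hBy s) hdy
  rw [← monomialIdeal_upperNsmul, colon_monomialIdeal (isUpperSet_upperNsmul hB s)] at hcolon
  rw [← monomialIdeal_upperNsmul, colon_monomialIdeal (isUpperSet_upperNsmul hA s), ← hcolon]
    at hne
  subst hcolon
  obtain ⟨j, hjs, m, hmy, hmB, hm, hmax⟩ := exists_maximal_level hA hB hAy hBy hdy fun h =>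
    hne ((monomialIdeal_mono h).antisymm
      (monomialIdeal_mono (preimage_mono (upperNsmul_mono hBA s))))
  have hcancel (u : σ →₀ ℕ) (hu : u + m + d ∈ upperNsmul B s) : u + d ∈ upperNsmul B s := by
    have hum := (monomial_mem_monomialIdeal_iff (R := R) hT).2 hu
    rw [← one_mul (1 : R), ← monomial_mul] at hum
    exact (monomial_mem_monomialIdeal_iff hT).1 <| (hp.mem_or_mem hum).resolve_right
      fun h => hmB ((monomial_mem_monomialIdeal_iff hT).1 h)
  refine ⟨⟨m + single y (s - 1 - j), fun h => hmB ?_, ?_⟩,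
    isPrime_monomialIdeal_sup_span_X hTy hp⟩
  · have := hTy ((monomial_mem_monomialIdeal_iff hT).1 h)
    rwa [mem_preimage, erase_add, erase_single, add_zero,
      erase_of_notMem_support (Finsupp.notMem_support_iff.2 hmy)] at this
  · rw [monomial_mul, one_mul, ← monomialIdeal_upperNsmul,
      colon_monomialIdeal (isUpperSet_upperNsmul hC s),
      preimage_upperNsmul_union_inter_eq hA hB hAy hBy hdy hjs hmy hm hmax hcancel,
      monomialIdeal_union, monomialIdeal_setOf_ne_zero]

end MvPolynomial

theorem SimpleHypergraph.filter_subset_erase_eq_erase {σ : Type*} [DecidableEq σ]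
    (H : SimpleHypergraph σ) {y : σ} {ey : Finset σ} (hyey : y ∈ ey)
    (huniq : ∀ f ∈ H.E, y ∈ f → f = ey) :
    H.E.filter (fun f => f ⊆ H.V.erase y) = H.E.erase ey := by
  ext f
  simp only [Finset.mem_filter, Finset.mem_erase]
  constructor
  · rintro ⟨hf, hfV⟩
    exact ⟨by rintro rfl; exact (Finset.mem_erase.1 (hfV hyey)).1 rfl, hf⟩
  · rintro ⟨hfey, hf⟩
    exact ⟨hf, fun v hv => Finset.mem_erase.2
      ⟨by rintro rfl; exact hfey (huniq f hf hv), H.edge_sub f hf hv⟩⟩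

theorem exists_monomial_colon_eq_sup_y_general {σ K : Type*} [DecidableEq σ] [Field K]
    (H : SimpleHypergraph σ) (y : σ) (ey : Finset σ)
    (heyE : ey ∈ H.E) (hyey : y ∈ ey)
    (huniq : ∀ f ∈ H.E, y ∈ f → f = ey)
    (s : ℕ) (d : σ →₀ ℕ) (hd : d.support ⊆ H.V.erase y)
    (p : Ideal (MvPolynomial σ K)) (hp : p.IsPrime)
    (hcolon : ((coverIdeal K (insert (ey.erase y) (H.E.erase ey))) ^ s).colon
        (Ideal.span {(monomial d (1 : K) : MvPolynomial σ K)}) = p)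
    (hne : ((coverIdeal K (H.E.filter (fun f => f ⊆ H.V.erase y))) ^ s).colon
        (Ideal.span {(monomial d (1 : K) : MvPolynomial σ K)}) ≠ p) :
    (∃ c : σ →₀ ℕ, (monomial c (1 : K) : MvPolynomial σ K) ∉ p ∧
        ((coverIdeal K H.E) ^ s).colon
          (Ideal.span {(monomial d (1 : K) * monomial c (1 : K) : MvPolynomial σ K)}) =
          p ⊔ Ideal.span {(X y : MvPolynomial σ K)}) ∧
      IsAssociatedPrimeOld (p ⊔ Ideal.span {(X y : MvPolynomial σ K)})
        (MvPolynomial σ K ⧸ (coverIdeal K H.E) ^ s) := by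
  have hdy : d y = 0 := Finsupp.notMem_support_iff.1 fun h => (Finset.mem_erase.1 (hd h)).1 rfl
  have hyE : ∀ f ∈ H.E.erase ey, y ∉ f := fun f hf hyf =>
    Finset.ne_of_mem_erase hf (huniq f (Finset.mem_of_mem_erase hf) hyf)
  have hJ : coverIdeal K H.E = monomialIdeal K (coverExponents (insert (ey.erase y) (H.E.erase ey))
      ∪ (coverExponents (H.E.erase ey) ∩ {c | c y ≠ 0})) := by
    rw [coverIdeal_eq_monomialIdeal, ← coverExponents_insert_eq_union hyey,
      Finset.insert_erase heyE]
  rw [H.filter_subset_erase_eq_erase hyey huniq] at hne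
  rw [coverIdeal_eq_monomialIdeal] at hcolon hne
  rw [hJ]
  obtain ⟨⟨c, hcp, hc⟩, hprime⟩ := exists_colon_eq_sup_span_X (isUpperSet_coverExponents _)
    (isUpperSet_coverExponents _) (coverExponents_anti (Finset.subset_insert _ _))
    (mapsTo_erase_coverExponents hyE)
    (mapsTo_erase_coverExponents
      ((Finset.forall_mem_insert _ _ _).2 ⟨Finset.notMem_erase y ey, hyE⟩))
    hdy hp hcolon hne
  exact ⟨⟨c, hcp, hc⟩, isAssociatedPrimeOld_of_colon_eq hprime hc⟩

/-- Under Notation (*): if `(J(H')^s : m) = p` and `(J(H̃)^s : m) ≠ p`, then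
there is a monomial `m₀ ∉ p` with `(J(H)^s : m·m₀) = p + (y)`; in particular `p + (y)` is an
associated prime of `J(H)^s`. -/
theorem exists_monomial_colon_eq_sup_y {σ K : Type*} [DecidableEq σ] [Field K]
    (H : SimpleHypergraph σ) (y : σ) (ey : Finset σ)
    (hyV : y ∈ H.V) (heyE : ey ∈ H.E) (hyey : y ∈ ey)
    (huniq : ∀ f ∈ H.E, y ∈ f → f = ey)
    (s : ℕ) (d : σ →₀ ℕ) (hd : d.support ⊆ H.V.erase y)
    (p : Ideal (MvPolynomial σ K)) (hp : p.IsPrime)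
    (hcolon : ((coverIdeal K (insert (ey.erase y) (H.E.erase ey))) ^ s).colon
        (Ideal.span {(monomial d (1 : K) : MvPolynomial σ K)}) = p)
    (hne : ((coverIdeal K (H.E.filter (fun f => f ⊆ H.V.erase y))) ^ s).colon
        (Ideal.span {(monomial d (1 : K) : MvPolynomial σ K)}) ≠ p) :
    (∃ c : σ →₀ ℕ, (monomial c (1 : K) : MvPolynomial σ K) ∉ p ∧
        ((coverIdeal K H.E) ^ s).colon
          (Ideal.span {(monomial d (1 : K) * monomial c (1 : K) : MvPolynomial σ K)}) =
          p ⊔ Ideal.span {(X y : MvPolynomial σ K)}) ∧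
      IsAssociatedPrimeOld (p ⊔ Ideal.span {(X y : MvPolynomial σ K)})
        (MvPolynomial σ K ⧸ (coverIdeal K H.E) ^ s) :=
  exists_monomial_colon_eq_sup_y_general H y ey heyE hyey huniq s d hd p hp hcolon hne
end
end

section
/- Under Notation (*): if (J(H')^s : m) = p is prime and p_e ⊄ p (the prime of the edge e is not contained in p), then (J(H)^s : m) = p. -/
open MvPolynomial

noncomputable section

/- Pick a vertex `v ∈ e` with `x_v ∉ p`. Since `J(H') ≤ J(H)` and `x_v J(H) ≤ J(H')`, the
colon ideal `(J(H)^s : m)` contains `(J(H')^s : m) = p` and is multiplied into it by `x_v ^ s`;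
primality of `p` then forces equality. -/

section CoverIdeal

variable {σ K : Type*} [Field K]

theorem primeOf_mono {e f : Finset σ} (hef : e ⊆ f) : primeOf K e ≤ primeOf K f :=
  Ideal.span_mono (Set.image_mono (Finset.coe_subset.2 hef))

theorem X_mem_primeOf {e : Finset σ} {v : σ} (hv : v ∈ e) :
    (X v : MvPolynomial σ K) ∈ primeOf K e :=
  Ideal.subset_span ⟨v, hv, rfl⟩

theorem exists_X_notMem_of_not_primeOf_le {e : Finset σ} {p : Ideal (MvPolynomial σ K)}
    (h : ¬ primeOf K e ≤ p) : ∃ v ∈ e, (X v : MvPolynomial σ K) ∉ p := by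
  contrapose! h
  exact Ideal.span_le.2 (Set.image_subset_iff.2 fun v hv => h v hv)

theorem coverIdeal_anti {E E' : Finset (Finset σ)} (h : E' ⊆ E) :
    coverIdeal K E ≤ coverIdeal K E' :=
  biInf_mono fun _ hf => h hf

variable [DecidableEq σ]

theorem coverIdeal_insert (e : Finset σ) (E : Finset (Finset σ)) :
    coverIdeal K (insert e E) = primeOf K e ⊓ coverIdeal K E := by
  simp only [coverIdeal, Finset.iInf_insert]

theorem coverIdeal_insert_erase_le {e f : Finset σ} (hef : e ⊆ f) (E : Finset (Finset σ)) :
    coverIdeal K (insert e (E.erase f)) ≤ coverIdeal K E :=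
  calc coverIdeal K (insert e (E.erase f))
      = primeOf K e ⊓ coverIdeal K (E.erase f) := coverIdeal_insert e _
    _ ≤ primeOf K f ⊓ coverIdeal K (E.erase f) := inf_le_inf_right _ (primeOf_mono hef)
    _ = coverIdeal K (insert f (E.erase f)) := (coverIdeal_insert f _).symm
    _ ≤ coverIdeal K E := coverIdeal_anti (Finset.insert_erase_subset f E)

theorem span_X_mul_coverIdeal_le {e : Finset σ} {v : σ} (hv : v ∈ e) (f : Finset σ)
    (E : Finset (Finset σ)) :
    Ideal.span {(X v : MvPolynomial σ K)} * coverIdeal K E ≤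
      coverIdeal K (insert e (E.erase f)) := by
  rw [coverIdeal_insert]
  refine le_inf (Ideal.mul_le_left.trans ?_) (Ideal.mul_le_right.trans ?_)
  · exact (Ideal.span_singleton_le_iff_mem _).2 (X_mem_primeOf hv)
  · exact coverIdeal_anti (Finset.erase_subset f E)

end CoverIdeal

theorem Ideal.colon_pow_eq_of_span_mul_le {R : Type*} [CommRing R] {I J P : Ideal R} {x : R}
    {s : ℕ} {S : Set R} (hIJ : I ≤ J) (hxJ : Ideal.span {x} * J ≤ I) (hP : P.IsPrime)
    (hx : x ∉ P) (hI : (I ^ s).colon S = P) : (J ^ s).colon S = P := by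
  have hxs : ∀ b ∈ J ^ s, x ^ s * b ∈ I ^ s := by
    rw [← Ideal.span_singleton_mul_le_iff, ← Ideal.span_singleton_pow, ← mul_pow]
    exact Ideal.pow_right_mono hxJ s
  refine le_antisymm (fun g hg => ?_)
    (hI ▸ Submodule.colon_mono (Ideal.pow_right_mono hIJ s) le_rfl)
  have hxg : x ^ s * g ∈ P := hI ▸ Submodule.mem_colon.2 fun t ht => by
    simpa only [smul_eq_mul, mul_assoc] using hxs _ (Submodule.mem_colon.1 hg t ht)
  exact (hP.mem_or_mem hxg).resolve_left fun h => hx (hP.mem_of_pow_mem s h)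

/- Notation (*): `H = (V, E)` is a hypergraph with `V = X ∪ {y}` where `X = V \ {y}`;
`y` belongs to exactly one edge `e_y ∈ E`; `e := e_y \ {y}`;
`H' = (X, (E \ {e_y}) ∪ {e})` is the shadow of `H` on `X`, with edge set
`insert (ey.erase y) (H.E.erase ey)`; `H̃ = H_X` is the induced subhypergraph on `X`,
with edge set `H.E.filter (· ⊆ H.V.erase y)`.  Cover ideals of `H'` and `H̃` are taken as
(cone) ideals of the ambient ring `K[V] = MvPolynomial σ K`, generated by the same monomials
as the corresponding ideals of `K[X]`. -/

theorem colon_eq_of_prime_edge_not_le_general {σ K : Type*} [DecidableEq σ] [Field K]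
    (H : SimpleHypergraph σ) (y : σ) (ey : Finset σ)
    (s : ℕ) (d : σ →₀ ℕ)
    (p : Ideal (MvPolynomial σ K)) (hp : p.IsPrime)
    (hcolon : ((coverIdeal K (insert (ey.erase y) (H.E.erase ey))) ^ s).colon
        (Ideal.span {(monomial d (1 : K) : MvPolynomial σ K)}) = p)
    (hnle : ¬ primeOf K (ey.erase y) ≤ p) :
    ((coverIdeal K H.E) ^ s).colon
        (Ideal.span {(monomial d (1 : K) : MvPolynomial σ K)}) = p := by
  obtain ⟨v, hv, hvp⟩ := exists_X_notMem_of_not_primeOf_le hnle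
  exact Ideal.colon_pow_eq_of_span_mul_le
    (coverIdeal_insert_erase_le (Finset.erase_subset y ey) _)
    (span_X_mul_coverIdeal_le hv ey H.E) hp hvp hcolon

/-- Under Notation (*): if `(J(H')^s : m) = p` is prime and `p_e ⊄ p`, then
`(J(H)^s : m) = p`. -/
theorem colon_eq_of_prime_edge_not_le {σ K : Type*} [DecidableEq σ] [Field K]
    (H : SimpleHypergraph σ) (y : σ) (ey : Finset σ)
    (hyV : y ∈ H.V) (heyE : ey ∈ H.E) (hyey : y ∈ ey)
    (huniq : ∀ f ∈ H.E, y ∈ f → f = ey)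
    (s : ℕ) (d : σ →₀ ℕ) (hd : d.support ⊆ H.V.erase y)
    (p : Ideal (MvPolynomial σ K)) (hp : p.IsPrime)
    (hcolon : ((coverIdeal K (insert (ey.erase y) (H.E.erase ey))) ^ s).colon
        (Ideal.span {(monomial d (1 : K) : MvPolynomial σ K)}) = p)
    (hnle : ¬ primeOf K (ey.erase y) ≤ p) :
    ((coverIdeal K H.E) ^ s).colon
        (Ideal.span {(monomial d (1 : K) : MvPolynomial σ K)}) = p :=
  colon_eq_of_prime_edge_not_le_general H y ey s d p hp hcolon hnle
end
end
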